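/- Under the single-barrier assumptions, the function α(μ) defined by α(μ)^2 = (2/π) ∫_{b_-(μ)}^{b_+(μ)} sqrt(A(t)^2 - μ^2) dt is continuous and strictly decreasing in μ on (A_*, A_max), and α(μ) → 0 as μ ↑ A_max. -/
import Mathlib


open Set Real intervalIntegral Filter

/-- the function `α(μ)` with
`α(μ)² = (2/π) ∫_{b₋(μ)}^{b₊(μ)} √(A(t)² - μ²) dt` is continuous, strictly
decreasing on `(A₊, A_max)`, and tends to `0` as `μ ↑ A_max`. -/
theorem alpha_continuous_strictAnti_tendsto_zero
    (A : ℝ → ℝ) (x1 x2 b0 : ℝ) (bm bp : ℝ → ℝ)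
    (hx : x1 < x2) (hb0 : b0 ∈ Ioo x1 x2)
    (hA : ContinuousOn A (Icc x1 x2))
    (hpos : ∀ x ∈ Icc x1 x2, 0 < A x)
    (hmono : StrictMonoOn A (Icc x1 b0))
    (hanti : StrictAntiOn A (Icc b0 x2))
    (Astar Amax : ℝ)
    (hAstar : Astar = max (A x1) (A x2)) (hAmax : Amax = A b0)
    (hbm : ∀ μ ∈ Ioo Astar Amax, bm μ ∈ Ioo x1 b0 ∧ A (bm μ) = μ)
    (hbp : ∀ μ ∈ Ioo Astar Amax, bp μ ∈ Ioo b0 x2 ∧ A (bp μ) = μ)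
    (hbar : ∀ μ ∈ Ioo Astar Amax, ∀ x ∈ Ioo (bm μ) (bp μ), μ < A x)
    (α : ℝ → ℝ)
    (hα : ∀ μ, α μ =
      Real.sqrt ((2 / Real.pi) * ∫ t in bm μ..bp μ, Real.sqrt (A t ^ 2 - μ ^ 2))) :
    ContinuousOn α (Ioo Astar Amax) ∧
    StrictAntiOn α (Ioo Astar Amax) ∧
    Tendsto α (nhdsWithin Amax (Iio Amax)) (nhds 0) := by
  obtain ⟨hx1b0, hb0x2⟩ := hb0
  have hb0mem : b0 ∈ Icc x1 x2 := ⟨hx1b0.le, hb0x2.le⟩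
  have hAx1 : 0 < A x1 := hpos x1 ⟨le_rfl, hx.le⟩
  have hAstarpos : 0 < Astar := by
    rw [hAstar]; exact lt_max_of_lt_left hAx1
  have hAm : Astar < Amax := by
    rw [hAstar, hAmax]
    exact max_lt (hmono ⟨le_rfl, hx1b0.le⟩ ⟨hx1b0.le, le_rfl⟩ hx1b0)
      (hanti ⟨le_rfl, hb0x2.le⟩ ⟨hb0x2.le, le_rfl⟩ hb0x2)
  have hAle : ∀ x ∈ Icc x1 x2, A x ≤ Amax := by
    intro x hxm
    rw [hAmax]
    rcases le_total x b0 with h | h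
    · exact hmono.monotoneOn ⟨hxm.1, h⟩ ⟨hx1b0.le, le_rfl⟩ h
    · exact hanti.antitoneOn ⟨le_rfl, hb0x2.le⟩ ⟨h, hxm.2⟩ h
  have hpi : (0:ℝ) < 2 / Real.pi := div_pos two_pos Real.pi_pos
  -- continuous extension of A to all of ℝ
  set At : ℝ → ℝ := Set.IccExtend hx.le ((Icc x1 x2).restrict A) with hAtdef
  have hAtc : Continuous At := hA.restrict.Icc_extend'
  have hAteq : ∀ t ∈ Icc x1 x2, At t = A t := by
    intro t ht
    rw [hAtdef, Set.IccExtend_of_mem hx.le _ ht]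
    rfl
  set g : ℝ → ℝ → ℝ := fun μ t => Real.sqrt (At t ^ 2 - μ ^ 2) with hgdef
  have hgc : Continuous (Function.uncurry g) := by
    apply Real.continuous_sqrt.comp
    exact ((hAtc.comp continuous_snd).pow 2).sub (continuous_fst.pow 2)
  have hgμc : ∀ μ, Continuous (g μ) := by
    intro μ
    exact Real.continuous_sqrt.comp (((hAtc.pow 2)).sub continuous_const)
  set F : ℝ → ℝ := fun μ => ∫ t in x1..x2, g μ t with hFdef
  have hFc : Continuous F :=
    intervalIntegral.continuous_parametric_intervalIntegral_of_continuous' hgc x1 x2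
  -- the integrand vanishes outside [bm μ, bp μ]
  have hzero : ∀ μ ∈ Ioo Astar Amax, ∀ t ∈ Icc x1 x2, A t ≤ μ → g μ t = 0 := by
    intro μ hμ t ht hAtμ
    have h1 : At t ^ 2 - μ ^ 2 ≤ 0 := by
      rw [hAteq t ht]
      have := (hpos t ht).le
      nlinarith
    exact Real.sqrt_eq_zero'.mpr h1
  -- key: α μ = √((2/π) * F μ) on the interval
  have hαF : ∀ μ ∈ Ioo Astar Amax, α μ = Real.sqrt ((2 / Real.pi) * F μ) := by
    intro μ hμ
    obtain ⟨hbm1, hbm2⟩ := hbm μ hμ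
    obtain ⟨hbp1, hbp2⟩ := hbp μ hμ
    have hbmx : bm μ ∈ Icc x1 x2 := ⟨hbm1.1.le, hbm1.2.le.trans hb0x2.le⟩
    have hbpx : bp μ ∈ Icc x1 x2 := ⟨hx1b0.le.trans hbp1.1.le, hbp1.2.le⟩
    have hbmbp : bm μ ≤ bp μ := (hbm1.2.trans hbp1.1).le
    have hI : ∀ a b : ℝ, IntervalIntegrable (g μ) MeasureTheory.volume a b :=
      fun a b => (hgμc μ).intervalIntegrable a b
    have h1 : (∫ t in x1..bm μ, g μ t) = 0 := by
      rw [intervalIntegral.integral_congr (g := fun _ => (0:ℝ)) ?_,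
        intervalIntegral.integral_const, smul_zero]
      intro t ht
      rw [Set.uIcc_of_le hbm1.1.le] at ht
      have htx : t ∈ Icc x1 x2 := ⟨ht.1, ht.2.trans hbmx.2⟩
      refine hzero μ hμ t htx ?_
      rcases eq_or_lt_of_le ht.2 with h | h
      · rw [h, hbm2]
      · exact hbm2 ▸ (hmono ⟨ht.1, ht.2.trans hbm1.2.le⟩ ⟨hbm1.1.le, hbm1.2.le⟩ h).le
    have h3 : (∫ t in bp μ..x2, g μ t) = 0 := by
      rw [intervalIntegral.integral_congr (g := fun _ => (0:ℝ)) ?_,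
        intervalIntegral.integral_const, smul_zero]
      intro t ht
      rw [Set.uIcc_of_le hbp1.2.le] at ht
      have htx : t ∈ Icc x1 x2 := ⟨hbpx.1.trans ht.1, ht.2⟩
      refine hzero μ hμ t htx ?_
      rcases eq_or_lt_of_le ht.1 with h | h
      · rw [← h, hbp2]
      · exact hbp2 ▸ (hanti ⟨hbp1.1.le, hbp1.2.le⟩ ⟨hbp1.1.le.trans ht.1, ht.2⟩ h).le
    have h2 : (∫ t in bm μ..bp μ, g μ t)
        = ∫ t in bm μ..bp μ, Real.sqrt (A t ^ 2 - μ ^ 2) := by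
      apply intervalIntegral.integral_congr
      intro t ht
      rw [Set.uIcc_of_le hbmbp] at ht
      have htx : t ∈ Icc x1 x2 := ⟨hbmx.1.trans ht.1, ht.2.trans hbpx.2⟩
      simp only [hgdef, hAteq t htx]
    have hsplit : F μ = ∫ t in bm μ..bp μ, g μ t := by
      show (∫ t in x1..x2, g μ t) = ∫ t in bm μ..bp μ, g μ t
      have e1 := intervalIntegral.integral_add_adjacent_intervals
        (hI x1 (bm μ)) (hI (bm μ) x2)
      have e2 := intervalIntegral.integral_add_adjacent_intervals
        (hI (bm μ) (bp μ)) (hI (bp μ) x2)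
      simp only [h1, h3, zero_add, add_zero] at e1 e2
      rw [← e1, ← e2]
    rw [hα μ, hsplit, h2]
  have hβc : Continuous fun μ => Real.sqrt ((2 / Real.pi) * F μ) :=
    Real.continuous_sqrt.comp (continuous_const.mul hFc)
  have hαnn : ∀ μ, 0 ≤ α μ := by
    intro μ; rw [hα μ]; exact Real.sqrt_nonneg _
  have hFnn : ∀ μ, 0 ≤ F μ :=
    fun μ => intervalIntegral.integral_nonneg hx.le (fun t _ => Real.sqrt_nonneg _)
  refine ⟨hβc.continuousOn.congr hαF, ?_, ?_⟩
  · -- strict antitonicity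
    intro μ hμ ν hν hμν
    have hμ0 : 0 < μ := hAstarpos.trans hμ.1
    obtain ⟨hbm1, hbm2⟩ := hbm ν hν
    obtain ⟨hbp1, hbp2⟩ := hbp ν hν
    have hbmx : bm ν ∈ Icc x1 x2 := ⟨hbm1.1.le, hbm1.2.le.trans hb0x2.le⟩
    have hbpx : bp ν ∈ Icc x1 x2 := ⟨hx1b0.le.trans hbp1.1.le, hbp1.2.le⟩
    have hbmbp : bm ν < bp ν := hbm1.2.trans hbp1.1
    have hptle : ∀ t, g ν t ≤ g μ t := by
      intro t
      apply Real.sqrt_le_sqrt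
      nlinarith
    have hI : ∀ (ρ : ℝ) (a b : ℝ),
        IntervalIntegrable (fun t => g μ t - g ρ t) MeasureTheory.volume a b :=
      fun ρ a b => ((hgμc μ).sub (hgμc ρ)).intervalIntegrable a b
    have hmidpos : 0 < ∫ t in bm ν..bp ν, (g μ t - g ν t) := by
      apply intervalIntegral_pos_of_pos_on (hI ν _ _) _ hbmbp
      intro t ht
      have htx : t ∈ Icc x1 x2 := ⟨hbmx.1.trans ht.1.le, ht.2.le.trans hbpx.2⟩
      have hνA : ν < A t := hbar ν hν t ht
      have h0ν : (0:ℝ) < ν := hμ0.trans hμν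
      simp only [hgdef, hAteq t htx, sub_pos]
      apply Real.sqrt_lt_sqrt
      · nlinarith
      · nlinarith
    have hdiffpos : 0 < ∫ t in x1..x2, (g μ t - g ν t) := by
      have e1 := intervalIntegral.integral_add_adjacent_intervals
        (hI ν x1 (bm ν)) (hI ν (bm ν) x2)
      have e2 := intervalIntegral.integral_add_adjacent_intervals
        (hI ν (bm ν) (bp ν)) (hI ν (bp ν) x2)
      have n1 : 0 ≤ ∫ t in x1..bm ν, (g μ t - g ν t) :=
        intervalIntegral.integral_nonneg hbmx.1 (fun t _ => sub_nonneg.mpr (hptle t))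
      have n3 : 0 ≤ ∫ t in bp ν..x2, (g μ t - g ν t) :=
        intervalIntegral.integral_nonneg hbpx.2 (fun t _ => sub_nonneg.mpr (hptle t))
      rw [← e1, ← e2]
      linarith
    have hFlt : F ν < F μ := by
      have hsub : (∫ t in x1..x2, (g μ t - g ν t)) = F μ - F ν :=
        intervalIntegral.integral_sub ((hgμc μ).intervalIntegrable x1 x2)
          ((hgμc ν).intervalIntegrable x1 x2)
      rw [hsub] at hdiffpos
      linarith
    rw [hαF μ hμ, hαF ν hν]
    apply Real.sqrt_lt_sqrt (mul_nonneg hpi.le (hFnn ν))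
    exact mul_lt_mul_of_pos_left hFlt hpi
  · -- limit at Amax
    set h : ℝ → ℝ :=
      fun ρ => Real.sqrt ((2 / Real.pi) * ((x2 - x1) * Real.sqrt (Amax ^ 2 - ρ ^ 2))) with hhdef
    have hhc : Continuous h := by
      apply Real.continuous_sqrt.comp
      apply continuous_const.mul
      apply continuous_const.mul
      exact Real.continuous_sqrt.comp (continuous_const.sub (continuous_pow 2))
    have hh0 : h Amax = 0 := by
      simp [hhdef]
    have hhtend : Tendsto h (nhdsWithin Amax (Iio Amax)) (nhds 0) := by
      rw [← hh0]
      exact (hhc.tendsto Amax).mono_left nhdsWithin_le_nhds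
    have hbound : ∀ μ ∈ Ioo Astar Amax, α μ ≤ h μ := by
      intro μ hμ
      have hμ0 : 0 < μ := hAstarpos.trans hμ.1
      have hFle : F μ ≤ (x2 - x1) * Real.sqrt (Amax ^ 2 - μ ^ 2) := by
        have : F μ ≤ ∫ _t in x1..x2, Real.sqrt (Amax ^ 2 - μ ^ 2) := by
          apply intervalIntegral.integral_mono_on hx.le
            ((hgμc μ).intervalIntegrable x1 x2)
            (intervalIntegrable_const)
          intro t ht
          simp only [hgdef, hAteq t ht]
          apply Real.sqrt_le_sqrt
          have h1 := (hpos t ht).le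
          have h2 := hAle t ht
          nlinarith
        rwa [intervalIntegral.integral_const, smul_eq_mul] at this
      rw [hαF μ hμ, hhdef]
      exact Real.sqrt_le_sqrt (mul_le_mul_of_nonneg_left hFle hpi.le)
    apply tendsto_of_tendsto_of_tendsto_of_le_of_le' tendsto_const_nhds hhtend
    · exact Eventually.of_forall hαnn
    · filter_upwards [Ioo_mem_nhdsLT_of_mem ⟨hAm, le_rfl⟩] with μ hμ
      exact hbound μ hμ
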